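/- arXiv:1410.3218 — 2 statements merged into one kernel-verified Lean document; each statement's English description precedes it below -/
import Mathlib

section
/- Let B be a group with free presentation 0 → K → P → B → 0 (P free, K = ker of the projection). Define T_P = {p ∈ P | ∃ n > 0, pⁿ ∈ [P,P]} and T_K = {p ∈ K | ∃ n > 0, pⁿ ∈ [K,P]}. Then T_K is a normal subgroup of the group K ⊓ T_P. -/
/-!
Modulo a normal subgroup `N` with `⁅K, K⁆ ≤ N`, the image of `K` is abelian, and the torsion
elements of an abelian group form a subgroup. Hence the elements of `K` having a positive power
in `N` form a subgroup, normal as soon as `K` is. Both `T_P` (with `K = ⊤`, `N = [P, P]`) and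
`T_K` (with `N = ⁅K, P⁆`) are of this form, and `T_K ≤ T_P` since `⁅K, P⁆ ≤ [P, P]`.
-/

open scoped commutatorElement

namespace Subgroup

variable {G : Type*} [Group G]

theorem exists_pow_mem_iff_isOfFinOrder_mk (N : Subgroup G) [N.Normal] (g : G) :
    (∃ n : ℕ, 0 < n ∧ g ^ n ∈ N) ↔ IsOfFinOrder (g : G ⧸ N) := by
  simp only [isOfFinOrder_iff_pow_eq_one, ← QuotientGroup.mk_pow, QuotientGroup.eq_one_iff]

theorem commute_mk_of_commutatorElement_mem {N : Subgroup G} [N.Normal] {g h : G}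
    (hgh : ⁅g, h⁆ ∈ N) : Commute (g : G ⧸ N) (h : G ⧸ N) := by
  rw [← QuotientGroup.eq_one_iff] at hgh
  rw [← commutatorElement_eq_one_iff_commute]
  simpa only [QuotientGroup.mk_mul, QuotientGroup.mk_inv, commutatorElement_def] using hgh

def relTorsion (K N : Subgroup G) [N.Normal] (hKN : ⁅K, K⁆ ≤ N) : Subgroup G where
  carrier := {g | g ∈ K ∧ ∃ n : ℕ, 0 < n ∧ g ^ n ∈ N}
  one_mem' := ⟨K.one_mem, 1, one_pos, by simp⟩
  inv_mem' := by
    rintro g ⟨hgK, n, hn, hgn⟩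
    exact ⟨K.inv_mem hgK, n, hn, by simpa only [inv_pow] using N.inv_mem hgn⟩
  mul_mem' := by
    rintro g h ⟨hgK, hg⟩ ⟨hhK, hh⟩
    rw [exists_pow_mem_iff_isOfFinOrder_mk] at hg hh
    have hcomm := commute_mk_of_commutatorElement_mem
      (hKN (commutator_mem_commutator hgK hhK))
    refine ⟨K.mul_mem hgK hhK, (exists_pow_mem_iff_isOfFinOrder_mk N _).2 ?_⟩
    simpa only [QuotientGroup.mk_mul] using hcomm.isOfFinOrder_mul hg hh

variable {K N : Subgroup G} [N.Normal] (hKN : ⁅K, K⁆ ≤ N)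

theorem coe_relTorsion :
    (relTorsion K N hKN : Set G) = {g | g ∈ K ∧ ∃ n : ℕ, 0 < n ∧ g ^ n ∈ N} := rfl

theorem relTorsion_le : relTorsion K N hKN ≤ K := fun _ hg => hg.1

theorem relTorsion_mono {K' N' : Subgroup G} [N'.Normal] (hKN' : ⁅K', K'⁆ ≤ N')
    (hK : K ≤ K') (hN : N ≤ N') : relTorsion K N hKN ≤ relTorsion K' N' hKN' :=
  fun _ ⟨hgK, n, hn, hgn⟩ => ⟨hK hgK, n, hn, hN hgn⟩

theorem relTorsion_normal [K.Normal] : (relTorsion K N hKN).Normal where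
  conj_mem g := fun ⟨hgK, n, hn, hgn⟩ h =>
    ⟨‹K.Normal›.conj_mem g hgK h, n, hn, by rw [conj_pow]; exact ‹N.Normal›.conj_mem _ hgn h⟩

end Subgroup

open Subgroup in
theorem stmt8_general {P B : Type*} [Group P] [Group B]
    (f : P →* B) (K : Subgroup P) (hK : f.ker = K) :
    ∃ TP TK : Subgroup P,
      (TP : Set P) = {p : P | ∃ n : ℕ, 0 < n ∧ p ^ n ∈ commutator P} ∧
      (TK : Set P) = {p : P | p ∈ K ∧ ∃ n : ℕ, 0 < n ∧ p ^ n ∈ ⁅K, (⊤ : Subgroup P)⁆} ∧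
      TK ≤ K ⊓ TP ∧ (TK.subgroupOf (K ⊓ TP)).Normal := by
  have : K.Normal := hK ▸ f.normal_ker
  have hP : ⁅(⊤ : Subgroup P), ⊤⁆ ≤ commutator P := (commutator_def P).ge
  have hK' : ⁅K, K⁆ ≤ ⁅K, ⊤⁆ := commutator_mono le_rfl le_top
  refine ⟨relTorsion ⊤ _ hP, relTorsion K _ hK', ?_, coe_relTorsion hK', ?_, ?_⟩
  · simp only [coe_relTorsion, mem_top, true_and]
  · exact le_inf (relTorsion_le hK')
      (relTorsion_mono hK' hP le_top (commutator_mono le_top le_top))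
  · exact (relTorsion_normal hK').subgroupOf _

theorem stmt8 {P B : Type*} [Group P] [IsFreeGroup P] [Group B]
    (f : P →* B) (hf : Function.Surjective f) (K : Subgroup P) (hK : f.ker = K) :
    ∃ TP TK : Subgroup P,
      (TP : Set P) = {p : P | ∃ n : ℕ, 0 < n ∧ p ^ n ∈ commutator P} ∧
      (TK : Set P) = {p : P | p ∈ K ∧ ∃ n : ℕ, 0 < n ∧ p ^ n ∈ ⁅K, (⊤ : Subgroup P)⁆} ∧
      TK ≤ K ⊓ TP ∧ (TK.subgroupOf (K ⊓ TP)).Normal :=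
  stmt8_general f K hK
end

section
/- In a pointed category with kernels in which the Split Short Five Lemma holds (e.g. the category of groups), consider a commutative diagram of two short exact sequences 0 → K → A → B → 0 and 0 → K' → A' → B' → 0 with vertical morphisms u : K → K', v : A → A', w : B → B'. Then w is a monomorphism if and only if the left-hand square is a pullback. -/
theorem stmt13 {K A B K' A' B' : Type*} [Group K] [Group A] [Group B]
    [Group K'] [Group A'] [Group B']
    (k : K →* A) (f : A →* B) (k' : K' →* A') (f' : A' →* B')
    (u : K →* K') (v : A →* A') (w : B →* B')
    (hk : Function.Injective k) (hf : Function.Surjective f) (hker : f.ker = k.range)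
    (hk' : Function.Injective k') (hf' : Function.Surjective f') (hker' : f'.ker = k'.range)
    (hleft : ∀ p : K, v (k p) = k' (u p)) (hright : ∀ a : A, w (f a) = f' (v a)) :
    Function.Injective w ↔
      Function.Bijective
        (fun p : K => (⟨(k p, u p), hleft p⟩ : {q : A × K' // v q.1 = k' q.2})) := by
  constructor
  · intro hw
    constructor
    · intro p q h
      exact hk (congrArg (fun s => s.1.1) h)
    · rintro ⟨⟨a, x⟩, (hax : v a = k' x)⟩
      have h1 : a ∈ f.ker := by
        rw [MonoidHom.mem_ker]
        apply hw
        rw [map_one, hright, hax]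
        have : x ∈ f'.ker.comap k' := by rw [hker']; exact ⟨x, rfl⟩
        exact this
      rw [hker] at h1
      obtain ⟨p, hp⟩ := h1
      refine ⟨p, ?_⟩
      have hux : u p = x := hk' (by rw [← hleft, hp, hax])
      exact Subtype.ext (by simp [hp, hux])
  · intro hbij b1 b2 hb
    have key : ∀ b, w b = 1 → b = 1 := by
      intro b hb1
      obtain ⟨a, rfl⟩ := hf b
      have hv : v a ∈ f'.ker := by rw [MonoidHom.mem_ker, ← hright, hb1]
      rw [hker'] at hv
      obtain ⟨x, hx⟩ := hv
      obtain ⟨p, hp⟩ := hbij.2 ⟨(a, x), hx.symm⟩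
      have ha : k p = a := congrArg (fun s => s.1.1) hp
      rw [← ha]
      have : p ∈ f.ker.comap k := by rw [hker]; exact ⟨p, rfl⟩
      exact this
    have h1 : w (b1 * b2⁻¹) = 1 := by rw [map_mul, map_inv, hb, mul_inv_cancel]
    exact mul_inv_eq_one.mp (key _ h1)
end
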